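/- arXiv:2308.01998 — 2 statements merged into one kernel-verified Lean document; each statement's English description precedes it below -/
import Mathlib

section
/- Let J be the symmetric 7×7 Jacobian of the flexible star-class network with M = 7, J_{ik} = Σ_{j=1}^{7} β_j φ_{ij} φ_{kj} − γ·δ_{ik}. Assume 0 < β0 < γ (so R0 = β0/γ < 1) and γ/β0 < ζ < 1 + 7(1−R0)/R0. If φ_6 ∈ (0, 1/6] and |φ_6 − 1/7| < φ̃7, then every eigenvalue of J is negative; if φ_6 ∈ (0, 1/6] and |φ_6 − 1/7| > φ̃7, then J has a positive eigenvalue. -/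
/-!
Write `J = φ B φᵀ - γ` with `B = diag β`; the flux matrix `φ` is doubly stochastic, hence a
contraction for the Euclidean norm. The plane spanned by `𝟙` and `e₇` is `J`-invariant, so
`xᵀJx` splits into its values on that plane and on the orthogonal complement. On the complement the
last coordinate of `xᵀφ` vanishes, so only the rate `β0` is seen and `xᵀJx ≤ (β0 - γ)|x|² < 0`.
On the plane, `J` is the binary form `[[P, Q], [Q, R]]` in the basis `𝟙, e₇`, with `P < 0` by the
upper bound on `ζ`, and `49 (PR - Q²) = 42 γ² (c₀ - c₁ (7φ6 - 1)²)` where `c₀, c₁ > 0` and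
`c₀ / c₁ = 49 φ̃7²`.
So `J` is negative definite when `|φ6 - 1/7| < φ̃7`, and otherwise the plane vector `Q 𝟙 - P e₇`,
whose quadratic form is `P (PR - Q²) > 0`, forces a positive eigenvalue.
-/

open Matrix

/-- Off-diagonal fluxes of the flexible star-class network with `M = 7`:
the entry joining two distinct nodes depends only on the larger (0-based)
index, `φ_{ik} = φ_{max(i,k)}` (1-based: `φ_{ik} = φ_{k−1}` for `i < k`). -/
noncomputable def flexOff7 (φ1 φ2 φ3 φ4 φ5 φ6 : ℝ) :
    Matrix (Fin 7) (Fin 7) ℝ :=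
  Matrix.of fun i k => ![0, φ1, φ2, φ3, φ4, φ5, φ6] (max i k)

/-- Flux matrix of the flexible star-class network with `M = 7`: off-diagonal
entries given by `flexOff7`, diagonal entries `φ_{ii} = 1 − Σ_{j ≠ i} φ_{ij}`.
In particular node `7` is joined to every other node with flux `φ6` and
`φ_{77} = 1 − 6φ6`. -/
noncomputable def flexFlux7 (φ1 φ2 φ3 φ4 φ5 φ6 : ℝ) :
    Matrix (Fin 7) (Fin 7) ℝ :=
  Matrix.of fun i k =>
    if i = k then
      1 - ∑ j ∈ Finset.univ.filter (fun j => j ≠ i), flexOff7 φ1 φ2 φ3 φ4 φ5 φ6 i j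
    else flexOff7 φ1 φ2 φ3 φ4 φ5 φ6 i k

/-- Infection rates: `β_j = β0` for `j ≤ 6` (1-based), `β₇ = ζ·β0`. -/
noncomputable def flexBeta7 (β0 ζ : ℝ) : Fin 7 → ℝ :=
  ![β0, β0, β0, β0, β0, β0, ζ * β0]

/-- Jacobian of the infected subsystem at the disease-free equilibrium:
`J_{ik} = Σ_j β_j φ_{ij} φ_{kj} − γ·δ_{ik}`. -/
noncomputable def flexJac7 (β0 ζ γ φ1 φ2 φ3 φ4 φ5 φ6 : ℝ) :
    Matrix (Fin 7) (Fin 7) ℝ :=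
  Matrix.of fun i k =>
    (∑ j, flexBeta7 β0 ζ j * flexFlux7 φ1 φ2 φ3 φ4 φ5 φ6 i j *
        flexFlux7 φ1 φ2 φ3 φ4 φ5 φ6 k j)
      - γ * (if i = k then 1 else 0)

section

variable {n : Type*} [Fintype n]

lemma Matrix.IsHermitian.dotProduct_mulVec_add_of_dotProduct_mulVec_eq_zero {A : Matrix n n ℝ}
    (hA : A.IsHermitian) {v w : n → ℝ} (h : w ⬝ᵥ A *ᵥ v = 0) :
    (v + w) ⬝ᵥ A *ᵥ (v + w) = v ⬝ᵥ A *ᵥ v + w ⬝ᵥ A *ᵥ w := by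
  have hvw : v ⬝ᵥ A *ᵥ w = w ⬝ᵥ A *ᵥ v := by
    rw [dotProduct_mulVec, dotProduct_comm, ← vecMul_transpose,
      ← conjTranspose_eq_transpose_of_trivial, hA.eq]
  simp only [mulVec_add, add_dotProduct, dotProduct_add, hvw, h]
  ring

variable [DecidableEq n]

lemma Matrix.neg_of_mem_spectrum_of_dotProduct_mulVec_neg {A : Matrix n n ℝ}
    (hA : ∀ x ≠ 0, x ⬝ᵥ A *ᵥ x < 0) {μ : ℝ} (hμ : μ ∈ spectrum ℝ A) : μ < 0 := by
  rw [← spectrum_toLin', ← Module.End.hasEigenvalue_iff_mem_spectrum] at hμ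
  obtain ⟨x, hx⟩ := hμ.exists_hasEigenvector
  have hxx : 0 < x ⬝ᵥ x := by simpa using (dotProduct_self_star_pos_iff (R := ℝ)).mpr hx.2
  have := hA x hx.2
  rw [← toLin'_apply, hx.apply_eq_smul, dotProduct_smul, smul_eq_mul] at this
  exact neg_of_mul_neg_left this hxx.le

lemma Matrix.IsHermitian.exists_pos_mem_spectrum_of_dotProduct_mulVec_pos {A : Matrix n n ℝ}
    (hA : A.IsHermitian) {x : n → ℝ} (hx : 0 < x ⬝ᵥ A *ᵥ x) : ∃ μ ∈ spectrum ℝ A, 0 < μ := by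
  by_contra! h
  have hneg : (-A).PosSemidef := by
    refine posSemidef_iff_isHermitian_and_spectrum_nonneg.mpr ⟨hA.neg, fun μ hμ => ?_⟩
    rw [← spectrum.neg_eq, Set.mem_neg] at hμ
    simpa using h _ hμ
  have := hneg.dotProduct_mulVec_nonneg x
  simp only [star_trivial, neg_mulVec, dotProduct_neg] at this
  linarith

lemma Matrix.dotProduct_vecMul_self_le_of_mem_doublyStochastic {P : Matrix n n ℝ}
    (hP : P ∈ doublyStochastic ℝ n) (w : n → ℝ) : (w ᵥ* P) ⬝ᵥ (w ᵥ* P) ≤ w ⬝ᵥ w := by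
  have jensen (j : n) : (w ᵥ* P) j ^ 2 ≤ ∑ i, P i j * w i ^ 2 := by
    have := (even_two.convexOn_pow (𝕜 := ℝ)).map_sum_le (t := Finset.univ) (w := fun i => P i j)
      (p := w) (fun i _ => nonneg_of_mem_doublyStochastic hP)
      (sum_col_of_mem_doublyStochastic hP j) (fun i _ => Set.mem_univ _)
    simpa [vecMul, dotProduct, mul_comm] using this
  calc (w ᵥ* P) ⬝ᵥ (w ᵥ* P) = ∑ j, (w ᵥ* P) j ^ 2 := by simp [dotProduct, sq]
    _ ≤ ∑ j, ∑ i, P i j * w i ^ 2 := Finset.sum_le_sum fun j _ => jensen j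
    _ = w ⬝ᵥ w := by
      rw [Finset.sum_comm]
      simp [← Finset.sum_mul, sum_row_of_mem_doublyStochastic hP, dotProduct, sq]

lemma Matrix.dotProduct_mulVec_mul_diagonal_mul_transpose (P : Matrix n n ℝ) (β x : n → ℝ) :
    x ⬝ᵥ (P * diagonal β * Pᵀ) *ᵥ x = ∑ j, β j * (x ᵥ* P) j ^ 2 := by
  rw [dotProduct_mulVec, ← vecMul_vecMul, vecMul_transpose, dotProduct_comm, dotProduct_mulVec]
  simp only [← vecMul_vecMul, vecMul_diagonal, dotProduct]
  exact Finset.sum_congr rfl fun j _ => by ring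

end

lemma quadratic_neg_of_discrim_neg {P Q R a b : ℝ} (hP : P < 0) (hΔ : Q ^ 2 < P * R)
    (hab : a ≠ 0 ∨ b ≠ 0) : a ^ 2 * P + 2 * a * b * Q + b ^ 2 * R < 0 := by
  -- `P * (a²P + 2abQ + b²R) = (Pa + Qb)² + (PR - Q²) b²`
  have hsq : 0 < (P * a + Q * b) ^ 2 + (P * R - Q ^ 2) * b ^ 2 := by
    rcases eq_or_ne b 0 with rfl | hb
    · have ha : a ≠ 0 := by simpa using hab
      simpa using sq_pos_of_ne_zero (mul_ne_zero hP.ne ha)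
    · have := sub_pos.mpr hΔ
      positivity
  nlinarith

section FlexStar

variable (φ1 φ2 φ3 φ4 φ5 φ6 : ℝ)

lemma flexFlux7_transpose : (flexFlux7 φ1 φ2 φ3 φ4 φ5 φ6)ᵀ = flexFlux7 φ1 φ2 φ3 φ4 φ5 φ6 := by
  ext i k
  by_cases h : i = k
  · rw [h, transpose_apply]
  · simp [flexFlux7, flexOff7, h, Ne.symm h, max_comm]

lemma flexFlux7_sum_row (i : Fin 7) : ∑ k, flexFlux7 φ1 φ2 φ3 φ4 φ5 φ6 i k = 1 := by
  rw [← Finset.add_sum_erase _ _ (Finset.mem_univ i)]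
  simp only [flexFlux7, of_apply, if_true, Finset.filter_ne']
  rw [Finset.sum_congr rfl fun k hk => if_neg (Finset.ne_of_mem_erase hk).symm]
  ring

lemma flexFlux7_eq :
    flexFlux7 φ1 φ2 φ3 φ4 φ5 φ6 =
      !![1 - (φ1 + φ2 + φ3 + φ4 + φ5 + φ6), φ1, φ2, φ3, φ4, φ5, φ6;
         φ1, 1 - (φ1 + φ2 + φ3 + φ4 + φ5 + φ6), φ2, φ3, φ4, φ5, φ6;
         φ2, φ2, 1 - (2 * φ2 + φ3 + φ4 + φ5 + φ6), φ3, φ4, φ5, φ6;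
         φ3, φ3, φ3, 1 - (3 * φ3 + φ4 + φ5 + φ6), φ4, φ5, φ6;
         φ4, φ4, φ4, φ4, 1 - (4 * φ4 + φ5 + φ6), φ5, φ6;
         φ5, φ5, φ5, φ5, φ5, 1 - (5 * φ5 + φ6), φ6;
         φ6, φ6, φ6, φ6, φ6, φ6, 1 - 6 * φ6] := by
  ext i k
  fin_cases i <;> fin_cases k <;>
    simp [flexFlux7, flexOff7, Finset.sum_filter, Fin.sum_univ_seven, max_def] <;> ring

variable {φ1 φ2 φ3 φ4 φ5 φ6}

lemma flexFlux7_mem_doublyStochastic (h1 : 0 ≤ φ1) (h2 : 0 ≤ φ2) (h3 : 0 ≤ φ3) (h4 : 0 ≤ φ4)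
    (h5 : 0 ≤ φ5) (h6 : 0 ≤ φ6) (hdiag : ∀ i, 0 ≤ flexFlux7 φ1 φ2 φ3 φ4 φ5 φ6 i i) :
    flexFlux7 φ1 φ2 φ3 φ4 φ5 φ6 ∈ doublyStochastic ℝ (Fin 7) := by
  refine mem_doublyStochastic_iff_sum.mpr
    ⟨fun i k => ?_, flexFlux7_sum_row _ _ _ _ _ _, fun k => ?_⟩
  · rcases eq_or_ne i k with rfl | h
    · exact hdiag i
    · have hoff : ∀ m, 0 ≤ ![0, φ1, φ2, φ3, φ4, φ5, φ6] m := by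
        intro m; fin_cases m <;> simp [h1, h2, h3, h4, h5, h6]
      simpa [flexFlux7, flexOff7, h] using hoff (max i k)
  · have := flexFlux7_sum_row φ1 φ2 φ3 φ4 φ5 φ6 k
    rwa [← flexFlux7_transpose] at this

variable {β0 ζ γ : ℝ}

lemma flexJac7_eq : flexJac7 β0 ζ γ φ1 φ2 φ3 φ4 φ5 φ6 =
    flexFlux7 φ1 φ2 φ3 φ4 φ5 φ6 * diagonal (flexBeta7 β0 ζ) * (flexFlux7 φ1 φ2 φ3 φ4 φ5 φ6)ᵀ
      - γ • 1 := by
  ext i k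
  rw [Matrix.sub_apply, mul_apply]
  simp only [flexJac7, of_apply, mul_diagonal, transpose_apply, Matrix.smul_apply, one_apply,
    smul_eq_mul, mul_comm (flexBeta7 β0 ζ _)]

lemma flexJac7_isHermitian : (flexJac7 β0 ζ γ φ1 φ2 φ3 φ4 φ5 φ6).IsHermitian := by
  rw [flexJac7_eq, ← conjTranspose_eq_transpose_of_trivial]
  exact (isHermitian_mul_mul_conjTranspose _ (isHermitian_diagonal _)).sub
    (isHermitian_one.smul (IsSelfAdjoint.all γ))

lemma flexJac7_dotProduct_mulVec (x : Fin 7 → ℝ) :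
    x ⬝ᵥ flexJac7 β0 ζ γ φ1 φ2 φ3 φ4 φ5 φ6 *ᵥ x =
      ∑ j, flexBeta7 β0 ζ j * (x ᵥ* flexFlux7 φ1 φ2 φ3 φ4 φ5 φ6) j ^ 2 - γ * (x ⬝ᵥ x) := by
  rw [flexJac7_eq, sub_mulVec, dotProduct_sub, dotProduct_mulVec_mul_diagonal_mul_transpose,
    smul_mulVec, one_mulVec, dotProduct_smul, smul_eq_mul]

-- `flexP7`, `flexQ7`, `flexR7` are `𝟙ᵀJ𝟙`, `𝟙ᵀJe₇` and `e₇ᵀJe₇`.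
def flexP7 (β0 ζ γ : ℝ) : ℝ := (6 + ζ) * β0 - 7 * γ

def flexQ7 (β0 ζ γ φ6 : ℝ) : ℝ := β0 * (6 * φ6 + ζ * (1 - 6 * φ6)) - γ

def flexR7 (β0 ζ γ φ6 : ℝ) : ℝ := β0 * (6 * φ6 ^ 2 + ζ * (1 - 6 * φ6) ^ 2) - γ

lemma flexJac7_dotProduct_mulVec_plane (a b : ℝ) :
    ![a, a, a, a, a, a, a + b] ⬝ᵥ flexJac7 β0 ζ γ φ1 φ2 φ3 φ4 φ5 φ6 *ᵥ ![a, a, a, a, a, a, a + b] =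
      a ^ 2 * flexP7 β0 ζ γ + 2 * a * b * flexQ7 β0 ζ γ φ6 + b ^ 2 * flexR7 β0 ζ γ φ6 := by
  simp only [dotProduct, mulVec, flexJac7, flexBeta7, flexFlux7_eq, flexP7, flexQ7, flexR7,
    of_apply, cons_val', cons_val_fin_one, Fin.sum_univ_seven, Fin.isValue, cons_val_zero,
    cons_val_one, cons_val, mul_ite, mul_one, mul_zero, ↓reduceIte, Fin.reduceEq, sub_zero]
  ring

lemma flexJac7_dotProduct_mulVec_plane_eq_zero {w : Fin 7 → ℝ} (hw6 : w 6 = 0)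
    (hsum : ∑ i, w i = 0) (a b : ℝ) :
    w ⬝ᵥ flexJac7 β0 ζ γ φ1 φ2 φ3 φ4 φ5 φ6 *ᵥ ![a, a, a, a, a, a, a + b] = 0 := by
  have hw5 : w 5 = -(w 0 + w 1 + w 2 + w 3 + w 4) := by
    simp only [Fin.sum_univ_seven, hw6, add_zero] at hsum; linarith
  simp only [dotProduct, mulVec, flexJac7, flexBeta7, flexFlux7_eq, of_apply, cons_val',
    cons_val_fin_one, Fin.sum_univ_seven, Fin.isValue, cons_val_zero, cons_val_one, cons_val,
    mul_ite, mul_one, mul_zero, ↓reduceIte, Fin.reduceEq, sub_zero, hw5, hw6]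
  ring

lemma flexJac7_dotProduct_mulVec_le
    (hF : flexFlux7 φ1 φ2 φ3 φ4 φ5 φ6 ∈ doublyStochastic ℝ (Fin 7)) (hβ0 : 0 ≤ β0)
    {w : Fin 7 → ℝ} (hw6 : w 6 = 0) (hsum : ∑ i, w i = 0) :
    w ⬝ᵥ flexJac7 β0 ζ γ φ1 φ2 φ3 φ4 φ5 φ6 *ᵥ w ≤ (β0 - γ) * (w ⬝ᵥ w) := by
  set y := w ᵥ* flexFlux7 φ1 φ2 φ3 φ4 φ5 φ6
  have hy6 : y 6 = 0 := by
    simp only [Fin.sum_univ_seven] at hsum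
    simp only [y, vecMul, dotProduct, Fin.sum_univ_seven]
    simp only [flexFlux7_eq, of_apply, cons_val', cons_val, cons_val_fin_one, cons_val_zero,
      cons_val_one]
    linear_combination φ6 * hsum + (1 - 7 * φ6) * hw6
  have hβy : ∑ j, flexBeta7 β0 ζ j * y j ^ 2 = β0 * (y ⬝ᵥ y) := by
    simp only [flexBeta7, dotProduct, Fin.sum_univ_seven, cons_val_zero, cons_val_one, cons_val,
      hy6]
    ring
  rw [flexJac7_dotProduct_mulVec, hβy]
  nlinarith [mul_le_mul_of_nonneg_left (dotProduct_vecMul_self_le_of_mem_doublyStochastic hF w) hβ0]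

lemma flexJac7_dotProduct_mulVec_neg
    (hF : flexFlux7 φ1 φ2 φ3 φ4 φ5 φ6 ∈ doublyStochastic ℝ (Fin 7)) (hβ0 : 0 ≤ β0) (hβγ : β0 < γ)
    (hP : flexP7 β0 ζ γ < 0) (hΔ : flexQ7 β0 ζ γ φ6 ^ 2 < flexP7 β0 ζ γ * flexR7 β0 ζ γ φ6)
    {x : Fin 7 → ℝ} (hx : x ≠ 0) :
    x ⬝ᵥ flexJac7 β0 ζ γ φ1 φ2 φ3 φ4 φ5 φ6 *ᵥ x < 0 := by
  -- `x = a • 𝟙 + b • e₇ + w` with `w ⊥ 𝟙, e₇`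
  set a := (x 0 + x 1 + x 2 + x 3 + x 4 + x 5) / 6
  set b := x 6 - a
  set w := x - ![a, a, a, a, a, a, a + b]
  have hw6 : w 6 = 0 := by simp only [w, b, Pi.sub_apply]; simp
  have hsum : ∑ i, w i = 0 := by
    simp only [w, Pi.sub_apply, Fin.sum_univ_seven]; simp only [cons_val_zero, cons_val_one, cons_val, a]; ring
  have hw : w ⬝ᵥ flexJac7 β0 ζ γ φ1 φ2 φ3 φ4 φ5 φ6 *ᵥ w ≤ (β0 - γ) * (w ⬝ᵥ w) :=
    flexJac7_dotProduct_mulVec_le hF hβ0 hw6 hsum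
  rw [← add_sub_cancel ![a, a, a, a, a, a, a + b] x,
    flexJac7_isHermitian.dotProduct_mulVec_add_of_dotProduct_mulVec_eq_zero
      (flexJac7_dotProduct_mulVec_plane_eq_zero hw6 hsum a b),
    flexJac7_dotProduct_mulVec_plane]
  by_cases hab : a = 0 ∧ b = 0
  · have hwx : w = x := by
      funext i
      simp only [w, Pi.sub_apply, hab.1, hab.2]
      fin_cases i <;> simp
    have hww : 0 < w ⬝ᵥ w := by
      simpa using (dotProduct_self_star_pos_iff (R := ℝ)).mpr (hwx ▸ hx)
    rw [hab.1, hab.2]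
    nlinarith
  · have hq := quadratic_neg_of_discrim_neg hP hΔ (not_and_or.mp hab)
    have hww : 0 ≤ w ⬝ᵥ w := by simpa using dotProduct_self_star_nonneg w
    nlinarith

lemma flexJac7_exists_pos_mem_spectrum (hP : flexP7 β0 ζ γ < 0)
    (hΔ : flexP7 β0 ζ γ * flexR7 β0 ζ γ φ6 < flexQ7 β0 ζ γ φ6 ^ 2) :
    ∃ μ ∈ spectrum ℝ (flexJac7 β0 ζ γ φ1 φ2 φ3 φ4 φ5 φ6), 0 < μ := by
  set P := flexP7 β0 ζ γ
  set Q := flexQ7 β0 ζ γ φ6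
  refine flexJac7_isHermitian.exists_pos_mem_spectrum_of_dotProduct_mulVec_pos
    (x := ![Q, Q, Q, Q, Q, Q, Q + -P]) ?_
  rw [flexJac7_dotProduct_mulVec_plane]
  nlinarith

end FlexStar

lemma flexP7_eq {β0 ζ γ : ℝ} (hγ : γ ≠ 0) :
    flexP7 β0 ζ γ = -γ * (7 * (1 - β0 / γ) - β0 / γ * (ζ - 1)) := by
  unfold flexP7
  field_simp
  ring

lemma flex_discrim_eq {β0 ζ γ φ6 : ℝ} (hγ : γ ≠ 0) :
    49 * (flexP7 β0 ζ γ * flexR7 β0 ζ γ φ6 - flexQ7 β0 ζ γ φ6 ^ 2) =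
      42 * γ ^ 2 * ((7 * (1 - β0 / γ) - β0 / γ * (ζ - 1)) -
        (7 * φ6 - 1) ^ 2 * (β0 / γ * (7 * ζ * (1 - β0 / γ) - (ζ - 1)))) := by
  unfold flexP7 flexQ7 flexR7
  field_simp
  ring

lemma flex_threshold_denom_pos {r ζ : ℝ} (hr : 0 < r) (hζ : 0 < ζ)
    (hc0 : 0 < 7 * (1 - r) - r * (ζ - 1)) : 0 < 7 * ζ * (1 - r) - (ζ - 1) := by
  rcases le_or_gt (7 * r) 6 with h | h
  · nlinarith
  · nlinarith [mul_lt_mul_of_pos_right hc0 (by linarith : 0 < 7 * r - 6), sq_nonneg (1 - r)]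

theorem flexStarClass7_DFE_general (β0 γ ζ φ1 φ2 φ3 φ4 φ5 φ6 : ℝ)
    (hβ0 : 0 < β0) (hβγ : β0 < γ)
    (hζlo : γ / β0 < ζ)
    (hζhi : ζ < 1 + 7 * (1 - β0 / γ) / (β0 / γ))
    (hφ1 : 0 < φ1) (hφ2 : 0 < φ2) (hφ3 : 0 < φ3) (hφ4 : 0 < φ4)
    (hφ5 : 0 < φ5) (hφ6lo : 0 < φ6)
    (hdiag : ∀ i : Fin 7, 0 ≤ flexFlux7 φ1 φ2 φ3 φ4 φ5 φ6 i i) :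
    (|φ6 - 1 / 7| <
        (1 / 7) * Real.sqrt ((7 * (1 - β0 / γ) - (β0 / γ) * (ζ - 1)) /
          ((β0 / γ) * (7 * ζ * (1 - β0 / γ) - (ζ - 1)))) →
      ∀ μ ∈ spectrum ℝ (flexJac7 β0 ζ γ φ1 φ2 φ3 φ4 φ5 φ6), μ < 0) ∧
    ((1 / 7) * Real.sqrt ((7 * (1 - β0 / γ) - (β0 / γ) * (ζ - 1)) /
          ((β0 / γ) * (7 * ζ * (1 - β0 / γ) - (ζ - 1)))) < |φ6 - 1 / 7| →
      ∃ μ ∈ spectrum ℝ (flexJac7 β0 ζ γ φ1 φ2 φ3 φ4 φ5 φ6), 0 < μ) := by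
  have hγ : 0 < γ := hβ0.trans hβγ
  have hr : 0 < β0 / γ := div_pos hβ0 hγ
  have hc0 : 0 < 7 * (1 - β0 / γ) - β0 / γ * (ζ - 1) := by
    have := (lt_div_iff₀ hr).mp (sub_lt_iff_lt_add'.mpr hζhi)
    linarith
  have hc1 : 0 < β0 / γ * (7 * ζ * (1 - β0 / γ) - (ζ - 1)) :=
    mul_pos hr (flex_threshold_denom_pos hr ((div_pos hγ hβ0).trans hζlo) hc0)
  have hP : flexP7 β0 ζ γ < 0 := by rw [flexP7_eq hγ.ne']; nlinarith
  have hF := flexFlux7_mem_doublyStochastic hφ1.le hφ2.le hφ3.le hφ4.le hφ5.le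
    hφ6lo.le hdiag
  have hΔ := flex_discrim_eq (β0 := β0) (ζ := ζ) (φ6 := φ6) hγ.ne'
  have habs : |φ6 - 1 / 7| = 1 / 7 * √((7 * φ6 - 1) ^ 2) := by
    rw [Real.sqrt_sq_eq_abs, ← abs_of_pos (by norm_num : (0 : ℝ) < 1 / 7), ← abs_mul]
    ring_nf
  rw [habs, mul_lt_mul_iff_right₀ (by norm_num), mul_lt_mul_iff_right₀ (by norm_num),
    Real.sqrt_lt_sqrt_iff (sq_nonneg _), Real.sqrt_lt_sqrt_iff (div_pos hc0 hc1).le,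
    lt_div_iff₀ hc1, div_lt_iff₀ hc1]
  refine ⟨fun h μ hμ => ?_, fun h => ?_⟩
  · refine neg_of_mem_spectrum_of_dotProduct_mulVec_neg (fun x hx => ?_) hμ
    exact flexJac7_dotProduct_mulVec_neg hF hβ0.le hβγ hP
      (by linarith [mul_pos (pow_pos hγ 2) (sub_pos.mpr h)]) hx
  · exact flexJac7_exists_pos_mem_spectrum hP
      (by linarith [mul_pos (pow_pos hγ 2) (sub_pos.mpr h)])

theorem flexStarClass7_DFE (β0 γ ζ φ1 φ2 φ3 φ4 φ5 φ6 : ℝ)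
    (hβ0 : 0 < β0) (hβγ : β0 < γ)
    (hζlo : γ / β0 < ζ)
    (hζhi : ζ < 1 + 7 * (1 - β0 / γ) / (β0 / γ))
    (hφ1 : 0 < φ1) (hφ2 : 0 < φ2) (hφ3 : 0 < φ3) (hφ4 : 0 < φ4)
    (hφ5 : 0 < φ5) (hφ6lo : 0 < φ6) (hφ6hi : φ6 ≤ 1 / 6)
    (hdiag : ∀ i : Fin 7, 0 ≤ flexFlux7 φ1 φ2 φ3 φ4 φ5 φ6 i i) :
    (|φ6 - 1 / 7| <
        (1 / 7) * Real.sqrt ((7 * (1 - β0 / γ) - (β0 / γ) * (ζ - 1)) /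
          ((β0 / γ) * (7 * ζ * (1 - β0 / γ) - (ζ - 1)))) →
      ∀ μ ∈ spectrum ℝ (flexJac7 β0 ζ γ φ1 φ2 φ3 φ4 φ5 φ6), μ < 0) ∧
    ((1 / 7) * Real.sqrt ((7 * (1 - β0 / γ) - (β0 / γ) * (ζ - 1)) /
          ((β0 / γ) * (7 * ζ * (1 - β0 / γ) - (ζ - 1)))) < |φ6 - 1 / 7| →
      ∃ μ ∈ spectrum ℝ (flexJac7 β0 ζ γ φ1 φ2 φ3 φ4 φ5 φ6), 0 < μ) :=
  flexStarClass7_DFE_general β0 γ ζ φ1 φ2 φ3 φ4 φ5 φ6 hβ0 hβγ hζlo hζhi hφ1 hφ2 hφ3 hφ4 hφ5 hφ6lo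
    hdiag
end

section
/- Homogeneous networks: let φ be an M×M real matrix that is symmetric, entrywise nonnegative, and row-stochastic (each row sums to 1), and let all infection rates be equal, β_j = β0 > 0 for every j, with recovery rate γ > 0. Then the next generation matrix is κ = (β0/γ)·φ·φᵀ; every eigenvalue λ of κ satisfies 0 ≤ λ ≤ β0/γ, and β0/γ is an eigenvalue of κ with eigenvector the all-ones vector. Consequently, all eigenvalues of κ are strictly less than 1 if and only if β0 < γ. -/
/-! With equal rates, `κ = (β0/γ) • φ φᵀ`. A symmetric row-stochastic `φ` is doubly stochastic,
so `φ φᵀ` is row-stochastic; it is also positive semidefinite. Hence its real spectrum lies in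
`[0, 1]` (positive semidefiniteness from below, Gershgorin's circle theorem from above), and the
all-ones vector is an eigenvector for `1`. Scaling by `β0/γ` gives every claim. -/

open Matrix

/-- Next generation matrix `κ_{ik} = (1/γ)·Σ_j β_j φ_{ij} φ_{kj}`. -/
noncomputable def ngm (M : ℕ) (β : Fin M → ℝ) (γ : ℝ)
    (φ : Matrix (Fin M) (Fin M) ℝ) : Matrix (Fin M) (Fin M) ℝ :=
  Matrix.of fun i k => (1 / γ) * ∑ j, β j * φ i j * φ k j

open scoped Pointwise

namespace Matrix

variable {n : Type*} [Fintype n] [DecidableEq n]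

theorem mem_spectrum_of_mulVec_eq_smul {K : Type*} [Field K] {A : Matrix n n K} {v : n → K}
    {μ : K} (hv : v ≠ 0) (h : A *ᵥ v = μ • v) : μ ∈ spectrum K A := by
  rw [← spectrum_toLin', ← Module.End.hasEigenvalue_iff_mem_spectrum]
  exact Module.End.hasEigenvalue_of_hasEigenvector
    ⟨Module.End.mem_eigenspace_iff.mpr (by rwa [toLin'_apply]), hv⟩

open scoped ComplexOrder in
theorem PosSemidef.nonneg_of_mem_spectrum {𝕜 : Type*} [RCLike 𝕜] {A : Matrix n n 𝕜}
    (hA : A.PosSemidef) {μ : ℝ} (hμ : μ ∈ spectrum ℝ A) : 0 ≤ μ := by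
  obtain ⟨i, rfl⟩ := hA.1.spectrum_real_eq_range_eigenvalues ▸ hμ
  exact hA.eigenvalues_nonneg i

theorem abs_le_one_of_mem_spectrum_of_mem_rowStochastic {A : Matrix n n ℝ}
    (hA : A ∈ rowStochastic ℝ n) {μ : ℝ} (hμ : μ ∈ spectrum ℝ A) : |μ| ≤ 1 := by
  rw [← spectrum_toLin', ← Module.End.hasEigenvalue_iff_mem_spectrum] at hμ
  obtain ⟨k, hk⟩ := eigenvalue_mem_ball hμ
  have hoff : ∑ j ∈ Finset.univ.erase k, ‖A k j‖ = 1 - A k k := by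
    simp only [Real.norm_of_nonneg (nonneg_of_mem_rowStochastic hA),
      ← sum_row_of_mem_rowStochastic hA k, ← Finset.add_sum_erase _ _ (Finset.mem_univ k),
      add_sub_cancel_left]
  rw [Metric.mem_closedBall, Real.dist_eq, hoff] at hk
  obtain ⟨hlow, hupp⟩ := abs_le.mp hk
  exact abs_le.mpr ⟨by linarith [nonneg_of_mem_rowStochastic hA (i := k) (j := k)], by linarith⟩

theorem IsSymm.mem_doublyStochastic_iff {A : Matrix n n ℝ} (hA : A.IsSymm) :
    A ∈ doublyStochastic ℝ n ↔ A ∈ rowStochastic ℝ n := by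
  rw [doublyStochastic_eq_rowStochastic_inf_colStochastic, Submonoid.mem_inf,
    ← transpose_mem_rowStochastic_iff_mem_colStochastic, hA.eq, and_self]

theorem mul_transpose_mem_rowStochastic {A : Matrix n n ℝ} (hA : A ∈ doublyStochastic ℝ n) :
    A * Aᵀ ∈ rowStochastic ℝ n := by
  have := mul_mem hA (transpose_mem_doublyStochastic_iff.mpr hA)
  rw [doublyStochastic_eq_rowStochastic_inf_colStochastic] at this
  exact this.1

end Matrix

theorem ngm_const_eq_smul_mul_transpose (M : ℕ) (φ : Matrix (Fin M) (Fin M) ℝ) (b γ : ℝ) :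
    ngm M (fun _ => b) γ φ = (b / γ) • (φ * φᵀ) := by
  ext i k
  simp only [ngm, of_apply, Matrix.smul_apply, mul_apply, transpose_apply, smul_eq_mul,
    Finset.mul_sum]
  exact Finset.sum_congr rfl fun j _ => by ring

/-- Homogeneous networks: for a symmetric, nonnegative, row-stochastic flux
matrix `φ` and equal infection rates `β_j = β0`, the next generation matrix
is `κ = (β0/γ)·φ·φᵀ`; every eigenvalue `λ` of `κ` satisfies
`0 ≤ λ ≤ β0/γ`; `β0/γ` is an eigenvalue of `κ` with the all-ones vector as
eigenvector; and all eigenvalues of `κ` are `< 1` iff `β0 < γ`. -/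
theorem homogeneous_ngm (M : ℕ) (hM : 0 < M)
    (φ : Matrix (Fin M) (Fin M) ℝ)
    (hsym : φ.IsSymm) (hnn : ∀ i j, 0 ≤ φ i j)
    (hrow : ∀ i, ∑ j, φ i j = 1)
    (β0 γ : ℝ) (hβ0 : 0 < β0) (hγ : 0 < γ) :
    ngm M (fun _ => β0) γ φ = (β0 / γ) • (φ * φᵀ) ∧
    (∀ μ ∈ spectrum ℝ (ngm M (fun _ => β0) γ φ), 0 ≤ μ ∧ μ ≤ β0 / γ) ∧
    (ngm M (fun _ => β0) γ φ) *ᵥ (fun _ => 1) = (β0 / γ) • (fun _ => (1 : ℝ)) ∧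
    β0 / γ ∈ spectrum ℝ (ngm M (fun _ => β0) γ φ) ∧
    ((∀ μ ∈ spectrum ℝ (ngm M (fun _ => β0) γ φ), μ < 1) ↔ β0 < γ) := by
  have : NeZero M := ⟨hM.ne'⟩
  have hφ : φ ∈ doublyStochastic ℝ (Fin M) :=
    hsym.mem_doublyStochastic_iff.mpr (mem_rowStochastic_iff_sum.mpr ⟨hnn, hrow⟩)
  have hS := mul_transpose_mem_rowStochastic hφ
  have hpsd : (φ * φᵀ).PosSemidef := by simpa using posSemidef_self_mul_conjTranspose φ
  have hc : 0 < β0 / γ := div_pos hβ0 hγ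
  have hκ := ngm_const_eq_smul_mul_transpose M φ β0 γ
  have hspec : spectrum ℝ (ngm M (fun _ => β0) γ φ) = (β0 / γ) • spectrum ℝ (φ * φᵀ) :=
    hκ ▸ spectrum.unit_smul_eq_smul _ (Units.mk0 _ hc.ne')
  have hones : ngm M (fun _ => β0) γ φ *ᵥ 1 = (β0 / γ) • 1 := by
    -- despite its name, `one_vecMul_of_mem_rowStochastic` states `A *ᵥ 1 = 1`
    rw [hκ, smul_mulVec, one_vecMul_of_mem_rowStochastic hS]
  have hbound : ∀ μ ∈ spectrum ℝ (ngm M (fun _ => β0) γ φ), 0 ≤ μ ∧ μ ≤ β0 / γ := by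
    rw [hspec]
    rintro _ ⟨ν, hν, rfl⟩
    exact ⟨mul_nonneg hc.le (hpsd.nonneg_of_mem_spectrum hν), mul_le_of_le_one_right hc.le
      (le_of_abs_le (abs_le_one_of_mem_spectrum_of_mem_rowStochastic hS hν))⟩
  have hmem := mem_spectrum_of_mulVec_eq_smul one_ne_zero hones
  refine ⟨hκ, hbound, hones, hmem, fun h => (div_lt_one hγ).mp (h _ hmem), fun h μ hμ => ?_⟩
  exact (hbound μ hμ).2.trans_lt ((div_lt_one hγ).mpr h)
end
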